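/- Let f be a continuous real-valued function on [-1,1] whose modulus of continuity ω_f(δ) = sup { |f(x) - f(y)| : x, y ∈ [-1,1], |x - y| ≤ δ } satisfies ω_f(1/n)·log n → 0 as n → ∞ (the Dini–Lipschitz condition). For each n, let p_n be the unique polynomial of degree at most n interpolating f at the n+1 Chebyshev nodes cos((2k+1)π/(2n+2)), k = 0, …, n. Then p_n converges to f uniformly on [-1,1], i.e. sup_{x ∈ [-1,1]} |f(x) - p_n(x)| → 0 as n → ∞. -/

import Mathlib

/-!
Lebesgue's inequality bounds the interpolation error by `(1 + Λₙ) E`, where `E` is the error of any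
polynomial approximation of degree `≤ n` on `[-1, 1]` and `Λₙ` is the Lebesgue constant of the
nodes. Writing `x = cos φ`, the Chebyshev nodes become the equally spaced angles `θₖ`, and
`|ℓₖ(cos φ)| ≤ 2π / (1 + (n + 1) |φ - θₖ|)` for the Lagrange basis, so `Λₙ = O(log n)`.
Bernstein polynomials give `E ≤ 2 ω(1/m)` with `m = ⌊√n⌋`, which is enough in place of Jackson's
`ω(1/n)`: since `log n ≤ 2 log m + log 4`, the error is `O(ω(1/m) (1 + log m)) → 0`.
-/

open Real Set Polynomial Filter
open scoped unitInterval

noncomputable def modulusOfContinuity (s : Set ℝ) (f : ℝ → ℝ) (δ : ℝ) : ℝ :=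
  sSup {d : ℝ | ∃ x ∈ s, ∃ y ∈ s, |x - y| ≤ δ ∧ d = |f x - f y|}

section ModulusOfContinuity

variable {s : Set ℝ} {f : ℝ → ℝ} {δ x y : ℝ}

theorem abs_sub_le_modulusOfContinuity (hs : IsCompact s) (hf : ContinuousOn f s)
    (hx : x ∈ s) (hy : y ∈ s) (hxy : |x - y| ≤ δ) :
    |f x - f y| ≤ modulusOfContinuity s f δ := by
  obtain ⟨C, hC⟩ := hs.exists_bound_of_continuousOn hf
  refine le_csSup ⟨2 * C, ?_⟩ ⟨x, hx, y, hy, hxy, rfl⟩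
  rintro _ ⟨x', hx', y', hy', -, rfl⟩
  simp only [Real.norm_eq_abs] at hC
  linarith [abs_sub (f x') (f y'), hC x' hx', hC y' hy']

theorem modulusOfContinuity_nonneg (hs : IsCompact s) (hf : ContinuousOn f s)
    (hne : s.Nonempty) (hδ : 0 ≤ δ) : 0 ≤ modulusOfContinuity s f δ := by
  obtain ⟨x, hx⟩ := hne
  simpa using abs_sub_le_modulusOfContinuity hs hf hx hx (by simpa using hδ)

theorem abs_sub_le_nat_mul_modulusOfContinuity (hs : IsCompact s) (hconv : Convex ℝ s)
    (hf : ContinuousOn f s) (m : ℕ) (hx : x ∈ s) (hy : y ∈ s) (hxy : |x - y| ≤ m * δ) :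
    |f x - f y| ≤ m * modulusOfContinuity s f δ := by
  induction m generalizing x with
  | zero => simp_all [sub_eq_zero]
  | succ m ih =>
    set z := x + (m + 1 : ℝ)⁻¹ • (y - x)
    have hz : z ∈ s :=
      hconv.add_smul_sub_mem hx hy ⟨by positivity, inv_le_one_of_one_le₀ (by simp)⟩
    have hm : (0 : ℝ) < m + 1 := by positivity
    have hxz : |x - z| ≤ δ := by
      rw [show x - z = (x - y) / (m + 1) by simp only [z, smul_eq_mul]; field_simp; ring,
        abs_div, abs_of_pos hm, div_le_iff₀ hm]
      push_cast at hxy; linarith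
    have hzy : |z - y| ≤ m * δ := by
      rw [show z - y = m * ((x - y) / (m + 1)) by simp only [z, smul_eq_mul]; field_simp; ring,
        abs_mul, abs_div, abs_of_pos hm, Nat.abs_cast]
      gcongr
      rw [div_le_iff₀ hm]; push_cast at hxy; linarith
    calc |f x - f y| ≤ |f x - f z| + |f z - f y| := abs_sub_le _ _ _
      _ ≤ modulusOfContinuity s f δ + m * modulusOfContinuity s f δ :=
          add_le_add (abs_sub_le_modulusOfContinuity hs hf hx hz hxz) (ih hz hzy)
      _ = (m + 1 : ℕ) * modulusOfContinuity s f δ := by push_cast; ring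

theorem abs_sub_le_one_add_div_mul_modulusOfContinuity (hs : IsCompact s) (hconv : Convex ℝ s)
    (hf : ContinuousOn f s) (hδ : 0 < δ) (hx : x ∈ s) (hy : y ∈ s) :
    |f x - f y| ≤ (1 + |x - y| / δ) * modulusOfContinuity s f δ := by
  have hω := modulusOfContinuity_nonneg hs hf ⟨x, hx⟩ hδ.le
  have hceil := Nat.ceil_lt_add_one (div_nonneg (abs_nonneg (x - y)) hδ.le)
  calc |f x - f y| ≤ ⌈|x - y| / δ⌉₊ * modulusOfContinuity s f δ := by
        refine abs_sub_le_nat_mul_modulusOfContinuity hs hconv hf _ hx hy ?_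
        rw [← div_le_iff₀ hδ]; exact Nat.le_ceil _
    _ ≤ (1 + |x - y| / δ) * modulusOfContinuity s f δ := by gcongr; linarith

end ModulusOfContinuity

theorem bernsteinPolynomial_natDegree_le (n ν : ℕ) :
    (bernsteinPolynomial ℝ n ν).natDegree ≤ n := by
  rcases le_or_gt ν n with h | h
  · unfold bernsteinPolynomial
    compute_degree
    omega
  · simp [bernsteinPolynomial.eq_zero_of_lt ℝ h]

theorem bernstein.sum_abs_sub_mul_le {n : ℕ} (hn : n ≠ 0) (x : I) :
    ∑ k : Fin (n + 1), |(x : ℝ) - bernstein.z k| * bernstein n k x ≤ 1 / (2 * √n) := by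
  have hsq :
      (∑ k : Fin (n + 1), |(x : ℝ) - bernstein.z k| * bernstein n k x) ^ 2 ≤ 1 / (4 * n) :=
    calc _ ≤ (∑ k : Fin (n + 1), bernstein n k x) *
            ∑ k : Fin (n + 1), ((x : ℝ) - bernstein.z k) ^ 2 * bernstein n k x :=
          Finset.sum_sq_le_sum_mul_sum_of_sq_le_mul _ (fun _ _ ↦ bernstein_nonneg)
            (fun _ _ ↦ mul_nonneg (sq_nonneg _) bernstein_nonneg)
            (fun _ _ ↦ le_of_eq (by rw [mul_pow, sq_abs]; ring))
      _ = x * (1 - x) / n := by rw [bernstein.probability, bernstein.variance hn, one_mul]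
      _ ≤ 1 / (4 * n) := by
          rw [div_le_div_iff₀ (by positivity) (by positivity)]
          nlinarith [sq_nonneg (2 * (x : ℝ) - 1)]
  have h4 : 1 / (4 * (n : ℝ)) = (1 / (2 * √n)) ^ 2 := by
    rw [div_pow, mul_pow, sq_sqrt (Nat.cast_nonneg n)]; norm_num
  rw [h4] at hsq
  exact abs_le_of_sq_le_sq' hsq (by positivity) |>.2

noncomputable def bernsteinPolyApprox (g : ℝ → ℝ) (n : ℕ) : ℝ[X] :=
  ∑ k : Fin (n + 1), C (g (k / n)) * bernsteinPolynomial ℝ n k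

theorem bernsteinPolyApprox_natDegree_le (g : ℝ → ℝ) (n : ℕ) :
    (bernsteinPolyApprox g n).natDegree ≤ n :=
  natDegree_sum_le_of_forall_le _ _ fun k _ ↦
    (natDegree_C_mul_le _ _).trans (bernsteinPolynomial_natDegree_le n k)

theorem abs_sub_eval_bernsteinPolyApprox_le {g : ℝ → ℝ} {w δ : ℝ} (hδ : 0 < δ)
    (hg : ∀ s ∈ I, ∀ t ∈ I, |g s - g t| ≤ (1 + |s - t| / δ) * w)
    {n : ℕ} (hn : n ≠ 0) (x : I) :
    |g x - (bernsteinPolyApprox g n).eval (x : ℝ)| ≤ (1 + 1 / (2 * δ * √n)) * w := by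
  have hw : 0 ≤ w := by simpa using hg x x.2 x x.2
  have heval : (bernsteinPolyApprox g n).eval (x : ℝ) =
      ∑ k : Fin (n + 1), g (bernstein.z k) * bernstein n k x := by
    simp [bernsteinPolyApprox, eval_finsetSum, bernstein, bernstein.z]
  have hsplit : g x - (bernsteinPolyApprox g n).eval (x : ℝ) =
      ∑ k : Fin (n + 1), (g x - g (bernstein.z k)) * bernstein n k x := by
    simp only [heval, sub_mul, Finset.sum_sub_distrib, ← Finset.mul_sum, bernstein.probability,
      mul_one]
  rw [hsplit]
  calc _ ≤ ∑ k : Fin (n + 1), |g x - g (bernstein.z k)| * bernstein n k x := by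
        refine (Finset.abs_sum_le_sum_abs _ _).trans_eq (Finset.sum_congr rfl fun k _ ↦ ?_)
        rw [abs_mul, abs_of_nonneg bernstein_nonneg]
    _ ≤ ∑ k : Fin (n + 1), (1 + |(x : ℝ) - bernstein.z k| / δ) * w * bernstein n k x := by
        gcongr with k
        exact hg x x.2 _ (bernstein.z k).2
    _ = w * ∑ k : Fin (n + 1), bernstein n k x +
          w / δ * ∑ k : Fin (n + 1), |(x : ℝ) - bernstein.z k| * bernstein n k x := by
        rw [Finset.mul_sum, Finset.mul_sum, ← Finset.sum_add_distrib]
        exact Finset.sum_congr rfl fun k _ ↦ by ring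
    _ = (1 + (∑ k : Fin (n + 1), |(x : ℝ) - bernstein.z k| * bernstein n k x) / δ) * w := by
        rw [bernstein.probability]; ring
    _ ≤ (1 + 1 / (2 * √n) / δ) * w := by
        gcongr; exact bernstein.sum_abs_sub_mul_le hn x
    _ = (1 + 1 / (2 * δ * √n)) * w := by ring

theorem exists_natDegree_le_forall_abs_sub_le_two_mul_modulusOfContinuity {f : ℝ → ℝ}
    (hf : ContinuousOn f (Icc (-1) 1)) {n : ℕ} (hn : n ≠ 0) {δ : ℝ} (hδ : 0 < δ)
    (hδn : 1 ≤ δ * √n) :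
    ∃ q : ℝ[X], q.natDegree ≤ n ∧
      ∀ x ∈ Icc (-1 : ℝ) 1, |f x - q.eval x| ≤ 2 * modulusOfContinuity (Icc (-1) 1) f δ := by
  set ω := modulusOfContinuity (Icc (-1) 1) f δ
  have hI : ∀ t ∈ I, 2 * t - 1 ∈ Icc (-1 : ℝ) 1 := fun t ht ↦
    ⟨by linarith [ht.1], by linarith [ht.2]⟩
  have hg : ∀ s ∈ I, ∀ t ∈ I,
      |f (2 * s - 1) - f (2 * t - 1)| ≤ (1 + |s - t| / (δ / 2)) * ω := by
    intro s hs t ht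
    convert abs_sub_le_one_add_div_mul_modulusOfContinuity isCompact_Icc (convex_Icc _ _) hf hδ
      (hI s hs) (hI t ht) using 3
    rw [show 2 * s - 1 - (2 * t - 1) = 2 * (s - t) by ring, abs_mul, abs_two]
    field_simp
  refine ⟨(bernsteinPolyApprox (fun t ↦ f (2 * t - 1)) n).comp (C 2⁻¹ * (X + 1)),
    (natDegree_comp_le).trans ?_, fun x hx ↦ ?_⟩
  · calc _ ≤ n * (C 2⁻¹ * (X + 1) : ℝ[X]).natDegree :=
          Nat.mul_le_mul_right _ (bernsteinPolyApprox_natDegree_le _ n)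
      _ ≤ n * 1 := by gcongr; compute_degree
      _ = n := mul_one n
  · have ht : (x + 1) / 2 ∈ I := ⟨by linarith [hx.1], by linarith [hx.2]⟩
    have herr := abs_sub_eval_bernsteinPolyApprox_le (half_pos hδ) hg hn ⟨_, ht⟩
    simp only [show 2 * ((x + 1) / 2) - 1 = x by ring] at herr
    have hlin : (C 2⁻¹ * (X + 1) : ℝ[X]).eval x = (x + 1) / 2 := by simp; ring
    rw [eval_comp, hlin]
    refine herr.trans ?_
    have hω : 0 ≤ ω := modulusOfContinuity_nonneg isCompact_Icc hf ⟨x, hx⟩ hδ.le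
    have : 1 / (2 * (δ / 2) * √n) ≤ 1 := by
      rw [show 2 * (δ / 2) * √n = δ * √n by ring]; exact div_le_one_of_le₀ hδn (by positivity)
    nlinarith

theorem abs_sub_eval_interpolate_le {F ι : Type*} [Field F] [LinearOrder F]
    [IsStrictOrderedRing F] [DecidableEq ι] {s : Finset ι} {v : ι → F} (hvs : Set.InjOn v s)
    {f : F → F} {q : F[X]} (hq : q.degree < s.card) {ε : F} (hnodes : ∀ i ∈ s, |f (v i) - q.eval (v i)| ≤ ε) (x : F)
    (hx : |f x - q.eval x| ≤ ε) :
    |f x - (Lagrange.interpolate s v fun i ↦ f (v i)).eval x| ≤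
      ε * (1 + ∑ i ∈ s, |(Lagrange.basis s v i).eval x|) := by
  have hsub : Lagrange.interpolate s v (fun i ↦ f (v i)) - q =
      Lagrange.interpolate s v fun i ↦ f (v i) - q.eval (v i) := by
    conv_lhs => rw [Lagrange.eq_interpolate hvs hq]
    rw [← map_sub]; rfl
  have hdiff : |(Lagrange.interpolate s v (fun i ↦ f (v i)) - q).eval x| ≤
      ε * ∑ i ∈ s, |(Lagrange.basis s v i).eval x| := by
    rw [hsub, Lagrange.interpolate_apply, eval_finsetSum, Finset.mul_sum]
    refine (Finset.abs_sum_le_sum_abs _ _).trans (Finset.sum_le_sum fun i hi ↦ ?_)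
    rw [eval_mul, eval_C, abs_mul]
    exact mul_le_mul_of_nonneg_right (hnodes i hi) (abs_nonneg _)
  rw [eval_sub] at hdiff
  have := abs_sub_le (f x) (q.eval x) ((Lagrange.interpolate s v fun i ↦ f (v i)).eval x)
  rw [abs_sub_comm (q.eval x)] at this
  linarith

theorem sin_mul_abs_sub_le_pi_mul_abs_cos_sub {φ θ : ℝ} (hφ : φ ∈ Icc 0 π)
    (hθ : θ ∈ Icc 0 π) :
    sin θ * |φ - θ| ≤ π * |cos φ - cos θ| := by
  have hs : 0 ≤ sin ((φ + θ) / 2) :=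
    sin_nonneg_of_nonneg_of_le_pi (by linarith [hφ.1, hθ.1]) (by linarith [hφ.2, hθ.2])
  have hsinθ : sin θ ≤ 2 * sin ((φ + θ) / 2) := by
    have := sin_add_sin θ φ
    rw [add_comm θ φ] at this
    nlinarith [sin_nonneg_of_nonneg_of_le_pi hφ.1 hφ.2, cos_le_one ((θ - φ) / 2)]
  have hd : 2 / π * |(φ - θ) / 2| ≤ |sin ((φ - θ) / 2)| :=
    mul_abs_le_abs_sin (by
      rw [abs_div, abs_two, div_le_div_iff_of_pos_right two_pos, abs_le]
      constructor <;> linarith [hφ.1, hφ.2, hθ.1, hθ.2])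
  rw [abs_div, abs_two] at hd
  have hd' : |φ - θ| ≤ π * |sin ((φ - θ) / 2)| := by
    rw [show 2 / π * (|φ - θ| / 2) = |φ - θ| / π by ring, div_le_iff₀' pi_pos] at hd
    exact hd
  rw [cos_sub_cos, abs_mul, abs_mul, abs_neg, abs_two, abs_of_nonneg hs]
  calc sin θ * |φ - θ| ≤ 2 * sin ((φ + θ) / 2) * (π * |sin ((φ - θ) / 2)|) :=
        mul_le_mul hsinθ hd' (abs_nonneg _) (by positivity)
    _ = _ := by ring

theorem sum_range_inv_one_add_abs_sub_le (c : ℝ) (n : ℕ) :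
    ∑ k ∈ Finset.range (n + 1), (1 + |c - k|)⁻¹ ≤ 2 * (harmonic (n + 1) : ℝ) := by
  -- left of `k₀` we have `|c - k| ≥ k₀ - k`, right of it `|c - k| ≥ k - k₀ - 1`
  set k₀ := min n ⌊c⌋₊
  have hH : ∀ m ≤ n + 1, ∑ j ∈ Finset.range m, ((j : ℝ) + 1)⁻¹ ≤ harmonic (n + 1) := by
    intro m hm
    push_cast [harmonic]
    exact Finset.sum_le_sum_of_subset_of_nonneg (Finset.range_subset_range.2 hm)
      fun _ _ _ ↦ by positivity
  have hterm : ∀ {j : ℕ} {y : ℝ}, (j : ℝ) ≤ |c - y| → (1 + |c - y|)⁻¹ ≤ ((j : ℝ) + 1)⁻¹ :=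
    fun h ↦ inv_anti₀ (by positivity) (by linarith)
  rw [← Finset.sum_range_add_sum_Ico _ (by omega : k₀ + 1 ≤ n + 1), Finset.sum_Ico_eq_sum_range,
    ← Finset.sum_range_reflect, two_mul]
  gcongr ?_ + ?_
  · refine (Finset.sum_le_sum fun j hj ↦ hterm ?_).trans (hH _ (by omega))
    have hj : j ≤ k₀ := by rw [Finset.mem_range] at hj; omega
    rw [show k₀ + 1 - 1 - j = k₀ - j by omega, Nat.cast_sub hj]
    rcases le_total 0 c with hc | hc
    · have : (k₀ : ℝ) ≤ c := (Nat.cast_le.2 (min_le_right _ _)).trans (Nat.floor_le hc)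
      rw [abs_of_nonneg (by linarith)]; linarith
    · have : k₀ = 0 := by simp [k₀, Nat.floor_of_nonpos hc]
      obtain rfl : j = 0 := by omega
      exact_mod_cast abs_nonneg _
  · refine (Finset.sum_le_sum fun j hj ↦ hterm ?_).trans (hH _ (by omega))
    have hk₀ : k₀ = ⌊c⌋₊ := by rw [Finset.mem_range] at hj; omega
    have : c < k₀ + 1 := hk₀ ▸ Nat.lt_floor_add_one c
    rw [abs_sub_comm, abs_of_nonneg (by push_cast; linarith)]; push_cast; linarith

noncomputable def chebyshevAngle (n k : ℕ) : ℝ := (2 * k + 1) * π / (2 * n + 2)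

noncomputable def chebyshevNode (n : ℕ) (k : Fin (n + 1)) : ℝ := cos (chebyshevAngle n k)

theorem chebyshevAngle_mem_Ioo {n k : ℕ} (hk : k ≤ n) : chebyshevAngle n k ∈ Ioo 0 π := by
  have hk' : (k : ℝ) ≤ n := by exact_mod_cast hk
  refine ⟨by unfold chebyshevAngle; positivity, ?_⟩
  rw [chebyshevAngle, div_lt_iff₀ (by positivity)]
  nlinarith [pi_pos]

theorem succ_mul_chebyshevAngle (n k : ℕ) :
    (n + 1 : ℝ) * chebyshevAngle n k = (2 * k + 1) * (π / 2) := by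
  unfold chebyshevAngle; field_simp

theorem cos_succ_mul_chebyshevAngle (n k : ℕ) : cos ((n + 1 : ℝ) * chebyshevAngle n k) = 0 := by
  rw [succ_mul_chebyshevAngle, cos_eq_zero_iff]
  exact ⟨k, by push_cast; ring⟩

theorem abs_sin_succ_mul_chebyshevAngle (n k : ℕ) :
    |sin ((n + 1 : ℝ) * chebyshevAngle n k)| = 1 := by
  have := sin_sq_add_cos_sq ((n + 1 : ℝ) * chebyshevAngle n k)
  rw [cos_succ_mul_chebyshevAngle, zero_pow two_ne_zero, add_zero] at this
  rw [← sq_eq_sq₀ (abs_nonneg _) zero_le_one, sq_abs, this, one_pow]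

theorem chebyshevNode_injective (n : ℕ) : Function.Injective (chebyshevNode n) := by
  intro k l h
  have hk := chebyshevAngle_mem_Ioo (Nat.lt_succ_iff.1 k.2)
  have hl := chebyshevAngle_mem_Ioo (Nat.lt_succ_iff.1 l.2)
  have := injOn_cos (Ioo_subset_Icc_self hk) (Ioo_subset_Icc_self hl) h
  unfold chebyshevAngle at this
  field_simp at this
  ext; exact_mod_cast (by linarith : ((k : ℕ) : ℝ) = l)

theorem chebyshev_T_succ_eq_C_mul_nodal (n : ℕ) :
    Chebyshev.T ℝ (n + 1) = C (2 ^ n) * Lagrange.nodal Finset.univ (chebyshevNode n) := by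
  have hnat : ((n : ℤ) + 1).natAbs = n + 1 := by omega
  have hdegT : (Chebyshev.T ℝ (n + 1)).degree = (Finset.univ : Finset (Fin (n + 1))).card := by
    rw [Chebyshev.degree_T, hnat]; simp
  have hdeg : (Chebyshev.T ℝ (n + 1)).degree =
      (C (2 ^ n) * Lagrange.nodal Finset.univ (chebyshevNode n)).degree := by
    rw [hdegT, degree_C_mul (by positivity), Lagrange.degree_nodal]
  have hlc : (Chebyshev.T ℝ (n + 1)).leadingCoeff =
      (C (2 ^ n) * Lagrange.nodal Finset.univ (chebyshevNode n)).leadingCoeff := by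
    rw [Chebyshev.leadingCoeff_T, leadingCoeff_C_mul_of_isUnit (IsUnit.mk0 _ (by positivity)),
      Lagrange.nodal_monic.leadingCoeff, hnat]
    simp
  have hT0 : Chebyshev.T ℝ (n + 1) ≠ 0 := by
    rw [Ne, ← degree_eq_bot, hdegT]; simp
  refine Polynomial.eq_of_degree_sub_lt_of_eval_index_eq Finset.univ
    (chebyshevNode_injective n).injOn (hdegT ▸ degree_sub_lt_left hdeg hT0 hlc) fun k _ ↦ ?_
  rw [eval_mul, Lagrange.eval_nodal_at_node (Finset.mem_univ k), mul_zero, chebyshevNode,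
    Chebyshev.T_real_cos]
  push_cast
  exact cos_succ_mul_chebyshevAngle n k

theorem eval_nodal_chebyshevNode_cos (n : ℕ) (φ : ℝ) :
    (Lagrange.nodal Finset.univ (chebyshevNode n)).eval (cos φ) = cos ((n + 1) * φ) / 2 ^ n := by
  have := congrArg (eval (cos φ)) (chebyshev_T_succ_eq_C_mul_nodal n)
  rw [Chebyshev.T_real_cos, eval_mul, eval_C] at this
  push_cast at this
  rw [this]; field_simp

theorem abs_eval_derivative_nodal_chebyshevNode_mul_sin {n : ℕ} (k : Fin (n + 1)) :
    |(derivative (Lagrange.nodal Finset.univ (chebyshevNode n))).eval (chebyshevNode n k)| *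
      sin (chebyshevAngle n k) = (n + 1) / 2 ^ n := by
  have hθ := chebyshevAngle_mem_Ioo (Nat.lt_succ_iff.1 k.2)
  have hsin := sin_pos_of_pos_of_lt_pi hθ.1 hθ.2
  have hderiv := congrArg (fun p ↦ (derivative p).eval (chebyshevNode n k))
    (chebyshev_T_succ_eq_C_mul_nodal n)
  have hU := Chebyshev.U_real_cos (chebyshevAngle n k) n
  simp only [Chebyshev.T_derivative_eq_U, derivative_C_mul, eval_mul, eval_C] at hderiv
  push_cast at hderiv hU
  simp only [add_sub_cancel_right, eval_add, eval_natCast, eval_one] at hderiv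
  rw [← chebyshevNode] at hU
  have hD :
      (derivative (Lagrange.nodal Finset.univ (chebyshevNode n))).eval (chebyshevNode n k) =
      (n + 1) * (Chebyshev.U ℝ n).eval (chebyshevNode n k) / 2 ^ n := by
    rw [hderiv]; field_simp
  calc _ = |(n + 1) / 2 ^ n * sin ((n + 1) * chebyshevAngle n k)| := by
        rw [← abs_of_pos hsin, ← abs_mul, hD, ← hU]; ring_nf
    _ = (n + 1) / 2 ^ n := by
        rw [abs_mul, abs_sin_succ_mul_chebyshevAngle, mul_one, abs_of_pos (by positivity)]

theorem abs_eval_basis_chebyshevNode_cos_mul {n : ℕ} {k : Fin (n + 1)} {φ : ℝ}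
    (hφ : cos φ ≠ chebyshevNode n k) :
    |(Lagrange.basis Finset.univ (chebyshevNode n) k).eval (cos φ)| *
      ((n + 1) * |cos φ - chebyshevNode n k|) =
        |cos ((n + 1) * φ)| * sin (chebyshevAngle n k) := by
  have hD := abs_eval_derivative_nodal_chebyshevNode_mul_sin k
  have hθ := chebyshevAngle_mem_Ioo (Nat.lt_succ_iff.1 k.2)
  have hsin := sin_pos_of_pos_of_lt_pi hθ.1 hθ.2
  rw [Lagrange.eval_basis_not_at_node (Finset.mem_univ k) hφ,
    Lagrange.nodalWeight_eq_eval_derivative_nodal (Finset.mem_univ k),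
    eval_nodal_chebyshevNode_cos, abs_mul, abs_mul, abs_inv, abs_inv, abs_div,
    abs_of_pos (by positivity : (0 : ℝ) < 2 ^ n)]
  rw [← eq_div_iff hsin.ne'] at hD
  rw [hD]
  field_simp

theorem abs_eval_basis_chebyshevNode_cos_mul_le {n : ℕ} (k : Fin (n + 1)) {φ : ℝ}
    (hφ : φ ∈ Icc 0 π) :
    |(Lagrange.basis Finset.univ (chebyshevNode n) k).eval (cos φ)| *
      (1 + (n + 1) * |φ - chebyshevAngle n k|) ≤ 2 * π := by
  set L := |(Lagrange.basis Finset.univ (chebyshevNode n) k).eval (cos φ)|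
  set θ := chebyshevAngle n k
  have hθ : θ ∈ Ioo 0 π := chebyshevAngle_mem_Ioo (Nat.lt_succ_iff.1 k.2)
  by_cases hnode : cos φ = chebyshevNode n k
  · have hφθ : φ = θ := injOn_cos hφ (Ioo_subset_Icc_self hθ) hnode
    rw [show L = 1 by
      rw [← abs_one, ← Lagrange.eval_basis_self (chebyshevNode_injective n).injOn
        (Finset.mem_univ k), ← hnode]]
    simp only [hφθ, sub_self, abs_zero, mul_zero, add_zero, one_mul]
    linarith [pi_gt_three]
  have hsin : 0 < sin θ := sin_pos_of_pos_of_lt_pi hθ.1 hθ.2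
  have hc : 0 < |cos φ - chebyshevNode n k| := abs_pos.2 (sub_ne_zero.2 hnode)
  have hL := abs_eval_basis_chebyshevNode_cos_mul hnode
  have htrig : sin θ * |φ - θ| ≤ π * |cos φ - chebyshevNode n k| :=
    sin_mul_abs_sub_le_pi_mul_abs_cos_sub hφ (Ioo_subset_Icc_self hθ)
  have hcos : |cos ((n + 1) * φ)| ≤ (n + 1) * |φ - θ| := by
    have := abs_cos_sub_cos_le ((n + 1) * φ) ((n + 1) * θ)
    rwa [cos_succ_mul_chebyshevAngle, sub_zero, ← mul_sub, abs_mul,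
      abs_of_pos (by positivity : (0 : ℝ) < n + 1)] at this
  have hfar : L * ((n + 1) * |φ - θ|) ≤ π := by
    refine le_of_mul_le_mul_right ?_ hsin
    calc L * ((n + 1) * |φ - θ|) * sin θ = L * (n + 1) * (sin θ * |φ - θ|) := by ring
      _ ≤ L * (n + 1) * (π * |cos φ - chebyshevNode n k|) := by gcongr
      _ = π * (|cos ((n + 1) * φ)| * sin θ) := by rw [← hL]; ring
      _ ≤ π * (1 * sin θ) := by gcongr; exact abs_cos_le_one _
      _ = π * sin θ := by ring
  have hnear : L ≤ π := by
    refine le_of_mul_le_mul_right ?_ (mul_pos (by positivity : (0 : ℝ) < n + 1) hc)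
    calc L * ((n + 1) * |cos φ - chebyshevNode n k|) = |cos ((n + 1) * φ)| * sin θ := hL
      _ ≤ (n + 1) * |φ - θ| * sin θ := by gcongr
      _ = (n + 1) * (sin θ * |φ - θ|) := by ring
      _ ≤ (n + 1) * (π * |cos φ - chebyshevNode n k|) := by gcongr
      _ = π * ((n + 1) * |cos φ - chebyshevNode n k|) := by ring
  linarith

theorem sum_abs_eval_basis_chebyshevNode_le (n : ℕ) {x : ℝ} (hx : x ∈ Icc (-1) 1) :
    ∑ k, |(Lagrange.basis Finset.univ (chebyshevNode n) k).eval x| ≤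
      4 * π * (harmonic (n + 1) : ℝ) := by
  have hφ : arccos x ∈ Icc 0 π := ⟨arccos_nonneg x, arccos_le_pi x⟩
  rw [← cos_arccos hx.1 hx.2]
  -- in the angle variable the nodes are equally spaced, `π / (n + 1)` apart
  set c := (n + 1) * arccos x / π - 1 / 2
  have hk : ∀ k : ℕ, |c - k| ≤ (n + 1) * |arccos x - chebyshevAngle n k| := by
    intro k
    have : (n + 1) * (arccos x - chebyshevAngle n k) = π * (c - k) := by
      simp only [c, chebyshevAngle]; field_simp; ring
    rw [← abs_of_pos (by positivity : (0 : ℝ) < n + 1), ← abs_mul, this, abs_mul,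
      abs_of_pos pi_pos]
    exact le_mul_of_one_le_left (abs_nonneg _) (by linarith [pi_gt_three])
  calc _ ≤ ∑ k : Fin (n + 1), 2 * π * (1 + |c - (k : ℕ)|)⁻¹ := by
        refine Finset.sum_le_sum fun k _ ↦ ?_
        rw [← div_eq_mul_inv, le_div_iff₀ (by positivity)]
        refine le_trans ?_ (abs_eval_basis_chebyshevNode_cos_mul_le k hφ)
        gcongr; exact hk k
    _ = 2 * π * ∑ k ∈ Finset.range (n + 1), (1 + |c - k|)⁻¹ := by
        rw [Fin.sum_univ_eq_sum_range (fun k ↦ 2 * π * (1 + |c - k|)⁻¹), Finset.mul_sum]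
    _ ≤ 2 * π * (2 * harmonic (n + 1)) := by
        gcongr; exact sum_range_inv_one_add_abs_sub_le c n
    _ = _ := by ring

noncomputable def chebyshevInterpolant (f : ℝ → ℝ) (n : ℕ) : ℝ[X] :=
  Lagrange.interpolate Finset.univ (chebyshevNode n) fun k ↦ f (chebyshevNode n k)

theorem abs_sub_eval_chebyshevInterpolant_le {f : ℝ → ℝ} (hf : ContinuousOn f (Icc (-1) 1))
    {n : ℕ} (hn : n ≠ 0) {δ : ℝ} (hδ : 0 < δ) (hδn : 1 ≤ δ * √n) {x : ℝ}
    (hx : x ∈ Icc (-1) 1) :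
    |f x - (chebyshevInterpolant f n).eval x| ≤
      2 * modulusOfContinuity (Icc (-1) 1) f δ * (1 + 4 * π * harmonic (n + 1)) := by
  obtain ⟨q, hqdeg, hq⟩ :=
    exists_natDegree_le_forall_abs_sub_le_two_mul_modulusOfContinuity hf hn hδ hδn
  have hqdeg' : q.degree < (Finset.univ : Finset (Fin (n + 1))).card := by
    rw [Finset.card_univ, Fintype.card_fin]
    exact (degree_le_of_natDegree_le hqdeg).trans_lt (by exact_mod_cast n.lt_succ_self)
  refine (abs_sub_eval_interpolate_le (chebyshevNode_injective n).injOn hqdeg'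
    (fun k _ ↦ hq _ ⟨neg_one_le_cos _, cos_le_one _⟩) x (hq x hx)).trans ?_
  have hω := modulusOfContinuity_nonneg isCompact_Icc hf ⟨x, hx⟩ hδ.le
  gcongr
  exact sum_abs_eval_basis_chebyshevNode_le n hx

theorem harmonic_succ_le_log_nat_sqrt {n : ℕ} (hn : n ≠ 0) :
    (harmonic (n + 1) : ℝ) ≤ 1 + log 4 + 2 * log (Nat.sqrt n) := by
  have hm : 0 < Nat.sqrt n := Nat.sqrt_pos.2 (Nat.pos_of_ne_zero hn)
  have hsucc : ((n + 1 : ℕ) : ℝ) ≤ 4 * (Nat.sqrt n : ℝ) ^ 2 := by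
    have := Nat.lt_succ_sqrt' n
    exact_mod_cast (by nlinarith : n + 1 ≤ 4 * Nat.sqrt n ^ 2)
  calc (harmonic (n + 1) : ℝ) ≤ 1 + log ((n + 1 : ℕ) : ℝ) := harmonic_le_one_add_log _
    _ ≤ 1 + log (4 * (Nat.sqrt n : ℝ) ^ 2) := by gcongr
    _ = 1 + log 4 + 2 * log (Nat.sqrt n) := by
        rw [log_mul (by norm_num) (by positivity), log_pow]; push_cast; ring

theorem tendsto_zero_of_tendsto_mul_log {a : ℕ → ℝ} (ha : ∀ m, 0 ≤ a m)
    (h : Tendsto (fun m : ℕ ↦ a m * log m) atTop (nhds 0)) : Tendsto a atTop (nhds 0) := by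
  refine squeeze_zero' (Eventually.of_forall ha) ((eventually_ge_atTop 3).mono fun m hm ↦ ?_) h
  have hlog : 1 ≤ log m := by
    rw [le_log_iff_exp_le (by positivity)]
    exact exp_one_lt_three.le.trans (by exact_mod_cast hm)
  exact le_mul_of_one_le_right (ha m) hlog

theorem sSup_abs_sub_eval_chebyshevInterpolant_le {f : ℝ → ℝ}
    (hf : ContinuousOn f (Icc (-1) 1)) {n : ℕ} (hn : n ≠ 0) :
    sSup ((fun x ↦ |f x - (chebyshevInterpolant f n).eval x|) '' Icc (-1) 1) ≤
      2 * (1 + 4 * π * (1 + log 4)) * modulusOfContinuity (Icc (-1) 1) f (1 / Nat.sqrt n) +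
        16 * π * (modulusOfContinuity (Icc (-1) 1) f (1 / Nat.sqrt n) * log (Nat.sqrt n)) := by
  have hm : (0 : ℝ) < Nat.sqrt n := by exact_mod_cast Nat.sqrt_pos.2 (Nat.pos_of_ne_zero hn)
  have hδn : 1 ≤ 1 / (Nat.sqrt n : ℝ) * √n := by
    rw [one_div_mul_eq_div, one_le_div hm]; exact Real.nat_sqrt_le_real_sqrt
  have hω := modulusOfContinuity_nonneg isCompact_Icc hf (nonempty_Icc.2 (by norm_num))
    (by positivity : 0 ≤ 1 / (Nat.sqrt n : ℝ))
  have hH := harmonic_succ_le_log_nat_sqrt hn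
  refine csSup_le (nonempty_Icc.2 (by norm_num) |>.image _) (forall_mem_image.2 fun x hx ↦ ?_)
  calc _ ≤ 2 * modulusOfContinuity (Icc (-1) 1) f (1 / Nat.sqrt n) *
          (1 + 4 * π * harmonic (n + 1)) :=
        abs_sub_eval_chebyshevInterpolant_le hf hn (by positivity) hδn hx
    _ ≤ 2 * modulusOfContinuity (Icc (-1) 1) f (1 / Nat.sqrt n) *
          (1 + 4 * π * (1 + log 4 + 2 * log (Nat.sqrt n))) := by gcongr
    _ = _ := by ring

/-- Dini–Lipschitz: if the modulus of continuity of `f` on `[-1,1]` satisfies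
`ω_f(1/n) · log n → 0`, then interpolation at the Chebyshev nodes converges
uniformly to `f` on `[-1,1]`. -/
theorem chebyshev_interpolation_dini_lipschitz
    (f : ℝ → ℝ) (hf : ContinuousOn f (Set.Icc (-1 : ℝ) 1))
    (ω : ℝ → ℝ)
    (hω : ∀ δ : ℝ, ω δ = sSup {d : ℝ | ∃ x ∈ Set.Icc (-1 : ℝ) 1,
      ∃ y ∈ Set.Icc (-1 : ℝ) 1, |x - y| ≤ δ ∧ d = |f x - f y|})
    (hDL : Tendsto (fun n : ℕ => ω (1 / n) * Real.log n) atTop (nhds 0))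
    (p : ℕ → ℝ[X])
    (hp : ∀ n : ℕ, p n = Lagrange.interpolate Finset.univ
      (fun k : Fin (n + 1) => Real.cos ((2 * (k : ℕ) + 1) * π / (2 * n + 2)))
      (fun k : Fin (n + 1) =>
        f (Real.cos ((2 * (k : ℕ) + 1) * π / (2 * n + 2))))) :
    Tendsto (fun n : ℕ =>
        sSup ((fun x => |f x - (p n).eval x|) '' Set.Icc (-1 : ℝ) 1))
      atTop (nhds 0) := by
  obtain rfl : ω = modulusOfContinuity (Icc (-1) 1) f := funext hω
  obtain rfl : p = chebyshevInterpolant f := funext hp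
  have ha : ∀ m : ℕ, 0 ≤ modulusOfContinuity (Icc (-1) 1) f (1 / m) := fun m ↦
    modulusOfContinuity_nonneg isCompact_Icc hf (nonempty_Icc.2 (by norm_num)) (by positivity)
  have hsqrt : Tendsto Nat.sqrt atTop atTop :=
    tendsto_atTop_atTop.2 fun b ↦ ⟨b * b, fun _ ↦ Nat.le_sqrt.2⟩
  have hlim := (((tendsto_zero_of_tendsto_mul_log ha hDL).const_mul
    (2 * (1 + 4 * π * (1 + log 4)))).add (hDL.const_mul (16 * π))).comp hsqrt
  rw [mul_zero, mul_zero, add_zero] at hlim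
  exact squeeze_zero' (Eventually.of_forall fun n ↦
      Real.sSup_nonneg (forall_mem_image.2 fun x _ ↦ abs_nonneg _))
    ((eventually_ne_atTop 0).mono fun n hn ↦ sSup_abs_sub_eval_chebyshevInterpolant_le hf hn) hlim
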